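/- Let A be a real m×n matrix such that A·Aᵀ is invertible, and set Ã = (A·Aᵀ)⁻¹. Let x, p ∈ ℝⁿ, b = A·x, and assume the scalar D = ⟪p, p⟫ - ⟪A·p, Ã·(A·p)⟫ is nonzero. Define α = (⟪x, p⟫ - ⟪A·p, Ã·b⟫)/D, u = Ã·(b - α·(A·p)), and q = α·p + Aᵀ·u. Then ‖q‖² = α²·‖p‖² + ⟪b, Ã·b⟫ - α²·⟪A·p, Ã·(A·p)⟫. -/

import Mathlib

open scoped RealInnerProductSpace
open Matrix

/-!
Expanding `‖α p + Aᵀ u‖²` gives `α² ‖p‖² + 2α ⟪A p, u⟫ + ⟪u, A Aᵀ u⟫`. Because `A Aᵀ Ã = 1`, the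
last term equals `⟪c, Ã c⟫` with `c = b - α A p`, and the symmetry of `Ã` makes the mixed terms
`± α ⟪A p, Ã b⟫` cancel.
-/

theorem EuclideanSpace.real_inner_eq_dotProduct {ι : Type*} [Fintype ι] (x y : EuclideanSpace ℝ ι) :
    ⟪x, y⟫ = WithLp.ofLp x ⬝ᵥ WithLp.ofLp y :=
  dotProduct_comm _ _

namespace Matrix

variable {l m R : Type*} [Fintype l] [Fintype m] [CommRing R]

theorem dotProduct_self_add_transpose_mulVec (A : Matrix m l R) (v : l → R) (u : m → R) :
    (v + Aᵀ *ᵥ u) ⬝ᵥ (v + Aᵀ *ᵥ u) = v ⬝ᵥ v + 2 * (A *ᵥ v ⬝ᵥ u) + u ⬝ᵥ (A * Aᵀ) *ᵥ u := by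
  have hcross : v ⬝ᵥ Aᵀ *ᵥ u = A *ᵥ v ⬝ᵥ u := by
    rw [dotProduct_transpose_mulVec, dotProduct_comm]
  have hquad : Aᵀ *ᵥ u ⬝ᵥ Aᵀ *ᵥ u = u ⬝ᵥ (A * Aᵀ) *ᵥ u := by
    rw [dotProduct_transpose_mulVec, mulVec_mulVec]
  rw [dotProduct_add, add_dotProduct, add_dotProduct, dotProduct_comm (Aᵀ *ᵥ u) v, hcross, hquad]
  ring

theorem mulVec_dotProduct_mulVec_mulVec_of_mul_eq_one {G M : Matrix m m R} [DecidableEq m]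
    (hGM : G * M = 1) (c : m → R) : M *ᵥ c ⬝ᵥ G *ᵥ (M *ᵥ c) = c ⬝ᵥ M *ᵥ c := by
  rw [mulVec_mulVec, hGM, one_mulVec, dotProduct_comm]

theorem dotProduct_self_smul_add_transpose_mulVec [DecidableEq m] (A : Matrix m l R)
    {M : Matrix m m R} (hM : M.IsSymm) (hAM : A * Aᵀ * M = 1) (α : R) (p : l → R) (b : m → R) :
    (α • p + Aᵀ *ᵥ (M *ᵥ (b - α • A *ᵥ p))) ⬝ᵥ (α • p + Aᵀ *ᵥ (M *ᵥ (b - α • A *ᵥ p))) =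
      α ^ 2 * (p ⬝ᵥ p) + b ⬝ᵥ M *ᵥ b - α ^ 2 * (A *ᵥ p ⬝ᵥ M *ᵥ (A *ᵥ p)) := by
  have hsymm : b ⬝ᵥ M *ᵥ (A *ᵥ p) = A *ᵥ p ⬝ᵥ M *ᵥ b := by
    rw [← hM.eq, dotProduct_transpose_mulVec, hM.eq]
  rw [dotProduct_self_add_transpose_mulVec, mulVec_dotProduct_mulVec_mulVec_of_mul_eq_one hAM]
  simp only [mulVec_smul, mulVec_sub, dotProduct_sub, sub_dotProduct, dotProduct_smul,
    smul_dotProduct, smul_eq_mul, hsymm]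
  ring

end Matrix

theorem ap_step_norm_identity {m n : ℕ}
    (A : Matrix (Fin m) (Fin n) ℝ) (hinv : IsUnit (A * Aᵀ))
    (Atil : Matrix (Fin m) (Fin m) ℝ) (hAtil : Atil = (A * Aᵀ)⁻¹)
    (p : EuclideanSpace ℝ (Fin n))
    (b : EuclideanSpace ℝ (Fin m))
    (Ap : EuclideanSpace ℝ (Fin m)) (hAp : Ap = A.mulVec p)
    (α : ℝ)
    (u : EuclideanSpace ℝ (Fin m)) (hu : u = Atil.mulVec (b - α • Ap))
    (Atu : EuclideanSpace ℝ (Fin n)) (hAtu : Atu = Aᵀ.mulVec u)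
    (q : EuclideanSpace ℝ (Fin n)) (hq : q = α • p + Atu) :
    ‖q‖ ^ 2 = α ^ 2 * ‖p‖ ^ 2 + ⟪b, (WithLp.toLp 2 (Atil.mulVec b) : EuclideanSpace ℝ (Fin m))⟫
      - α ^ 2 * ⟪Ap, (WithLp.toLp 2 (Atil.mulVec Ap) : EuclideanSpace ℝ (Fin m))⟫ := by
  have hAAt : A * Aᵀ * Atil = 1 :=
    hAtil ▸ mul_nonsing_inv _ ((A * Aᵀ).isUnit_iff_isUnit_det.mp hinv)
  have hsymm : Atil.IsSymm := by
    rw [hAtil]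
    exact IsSymm.inv (transpose_mul _ _)
  subst hq
  simp only [← real_inner_self_eq_norm_sq, EuclideanSpace.real_inner_eq_dotProduct,
    WithLp.ofLp_add, WithLp.ofLp_smul]
  rw [hAtu, hu, hAp]
  exact dotProduct_self_smul_add_transpose_mulVec A hsymm hAAt α p b
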